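/- arXiv:2009.10269 — 2 statements merged into one kernel-verified Lean document; each statement's English description precedes it below -/
import Mathlib

section
/- The dual assignment produced by the greedy algorithm is feasible for the dual LP: setting y_n = q_{n,i_n} for each winning user n, y_n = 0 for losing users, z = η_b·ψ̄ and t = η_a·ψ̄ with ψ̄ = κ·ψ, satisfies y_n + z·B_{ni} + t·A_{ni} ≥ q_{ni} for all users n and all bids i. -/
/-!
The prices `z, t` charge a bid `ψ̄` per unit of weighted size `s = η_b B + η_a A`. A winner's
constraint is covered by `y_n = q_{n,i_n}` alone. For a loser with `q_{n,i_n} ≥ 0`, `q_{ni} ≤ q_{n,i_n}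
= (s_{n,i_n}/s_{ni}) · (q_{n,i_n}/s_{n,i_n}) · s_{ni} ≤ κ (q_{n,i_n}/s_{n,i_n}) s_{ni} ≤ ψ̄ s_{ni}`;
if `q_{n,i_n} < 0`, then `q_{ni} < 0 ≤ ψ̄ s_{ni}`.
-/

theorem le_price_mul_size {q qbest s sbest κ ψ : ℝ} (hs : 0 < s) (hsbest : 0 < sbest)
    (hψ : 0 ≤ ψ) (hq : q ≤ qbest) (hκ : sbest / s ≤ κ) (hdensity : κ * (qbest / sbest) ≤ ψ) :
    q ≤ ψ * s := by
  rcases le_or_gt 0 qbest with hqbest | hqbest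
  · calc q ≤ qbest := hq
      _ = sbest / s * (qbest / sbest) * s := by field_simp
      _ ≤ κ * (qbest / sbest) * s := by gcongr
      _ ≤ ψ * s := by gcongr
  · nlinarith

theorem greedy_dual_feasible_general
    {ι β : Type*} [DecidableEq ι]
    (q B A : ι → β → ℝ) (ηb ηa κ ψbar : ℝ)
    (s : ι → β → ℝ) (hs : ∀ n i, s n i = ηb * B n i + ηa * A n i)
    (hspos : ∀ n i, 0 < s n i)
    (bi : ι → β)                       -- i_n : the best bid of user n
    (hbest : ∀ n i, q n i ≤ q n (bi n))
    (hκ : ∀ n i, s n (bi n) / s n i ≤ κ)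
    (W : Finset ι)                     -- the set of winning users
    (hψbar : 0 ≤ ψbar)
    (hloser : ∀ μ : ι, μ ∉ W → κ * (q μ (bi μ) / s μ (bi μ)) ≤ ψbar)
    (y : ι → ℝ) (hy : ∀ n, y n = if n ∈ W then q n (bi n) else 0)
    (z t : ℝ) (hz : z = ηb * ψbar) (ht : t = ηa * ψbar) :
    ∀ n i, q n i ≤ y n + z * B n i + t * A n i := by
  intro n i
  have hprice : z * B n i + t * A n i = ψbar * s n i := by
    rw [hz, ht, hs]
    ring
  rw [hy, add_assoc, hprice]
  split_ifs with hn
  · have := mul_nonneg hψbar (hspos n i).le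
    linarith [hbest n i]
  · rw [zero_add]
    exact le_price_mul_size (hspos n i) (hspos n (bi n)) hψbar (hbest n i) (hκ n i) (hloser n hn)

/-- The dual assignment produced by the greedy algorithm is feasible for the
dual LP: with y_n = q_{n,i_n} for winners, y_n = 0 for losers, z = η_b·ψ̄,
t = η_a·ψ̄, every dual constraint y_n + z·B_{ni} + t·A_{ni} ≥ q_{ni} holds. -/
theorem greedy_dual_feasible
    {ι β : Type*} [Fintype ι] [Fintype β] [DecidableEq ι]
    (q B A : ι → β → ℝ) (ηb ηa κ ψbar : ℝ)
    (hηb : 0 < ηb) (hηa : 0 < ηa)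
    (hBnn : ∀ n i, 0 ≤ B n i) (hAnn : ∀ n i, 0 ≤ A n i)
    (s : ι → β → ℝ) (hs : ∀ n i, s n i = ηb * B n i + ηa * A n i)
    (hspos : ∀ n i, 0 < s n i)
    (bi : ι → β)                       -- i_n : the best bid of user n
    (hbest : ∀ n i, q n i ≤ q n (bi n))
    (hκ : ∀ n i, s n (bi n) / s n i ≤ κ)
    (W : Finset ι)                     -- the set of winning users
    (hψbar : 0 ≤ ψbar)
    (hloser : ∀ μ : ι, μ ∉ W → κ * (q μ (bi μ) / s μ (bi μ)) ≤ ψbar)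
    (y : ι → ℝ) (hy : ∀ n, y n = if n ∈ W then q n (bi n) else 0)
    (z t : ℝ) (hz : z = ηb * ψbar) (ht : t = ηa * ψbar) :
    ∀ n i, q n i ≤ y n + z * B n i + t * A n i :=
  greedy_dual_feasible_general q B A ηb ηa κ ψbar s hs hspos bi hbest hκ W hψbar hloser y hy z t hz
    ht
end

section
/- The greedy algorithm achieves approximation ratio at most 1 + κ·Υ/(Υ - S) for the social welfare maximization problem: OP ≤ (1 + κΥ/(Υ-S))·φ, where φ is the greedy solution's welfare, Υ = η_b·B_max + η_a·A_max, S = max_{n,i} s_{ni}, and κ = max s_{ni}/s_{ni'}, assuming Υ > S. -/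
/-!
Each greedy winner has value at least `ψ` times its weighted size, and the winners fill more
than `Υ - S`, so `ψ (Υ - S) ≤ φ`. Pricing the two resources at `η_b κ ψ` and `η_a κ ψ` and giving
each winner its own bid value gives a feasible dual whose objective is `φ + κ ψ Υ`, so by weak
duality `OP ≤ φ + κ ψ Υ ≤ φ + κ Υ / (Υ - S) · φ`.
-/

open Finset

theorem mul_sum_le_sum_of_forall_le_div {ι : Type*} (U : Finset ι) {q s : ι → ℝ} {ψ : ℝ}
    (hs : ∀ n ∈ U, 0 < s n) (h : ∀ n ∈ U, ψ ≤ q n / s n) :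
    ψ * ∑ n ∈ U, s n ≤ ∑ n ∈ U, q n := by
  rw [mul_sum]
  exact sum_le_sum fun n hn => (le_div_iff₀ (hs n hn)).1 (h n hn)

/-- `y n` is the dual variable of user `n`'s one-bid constraint, `pb` and `pa` the resource prices. -/
theorem packing_weak_duality {ι β : Type*} [Fintype ι] [Fintype β]
    (q B A x : ι → β → ℝ) (y : ι → ℝ) (pb pa Bmax Amax : ℝ)
    (hx : ∀ n i, 0 ≤ x n i) (hone : ∀ n, ∑ i, x n i ≤ 1)
    (hB : ∑ n, ∑ i, x n i * B n i ≤ Bmax) (hA : ∑ n, ∑ i, x n i * A n i ≤ Amax)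
    (hy : ∀ n, 0 ≤ y n) (hpb : 0 ≤ pb) (hpa : 0 ≤ pa)
    (hdual : ∀ n i, q n i ≤ y n + pb * B n i + pa * A n i) :
    ∑ n, ∑ i, q n i * x n i ≤ ∑ n, y n + pb * Bmax + pa * Amax := by
  calc ∑ n, ∑ i, q n i * x n i
      ≤ ∑ n, ∑ i, (y n * x n i + pb * (x n i * B n i) + pa * (x n i * A n i)) :=
        sum_le_sum fun n _ => sum_le_sum fun i _ => by
          nlinarith [mul_le_mul_of_nonneg_right (hdual n i) (hx n i)]
    _ = ∑ n, y n * ∑ i, x n i + pb * ∑ n, ∑ i, x n i * B n i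
          + pa * ∑ n, ∑ i, x n i * A n i := by
        simp only [sum_add_distrib, mul_sum]
    _ ≤ ∑ n, y n + pb * Bmax + pa * Amax := by
        gcongr with n
        exact mul_le_of_le_one_right (hy n) (hone n)

theorem greedy_approximation_ratio_general
    {ι β : Type*} [Fintype ι] [Fintype β] [DecidableEq ι]
    (q B A : ι → β → ℝ) (hq : ∀ n i, 0 ≤ q n i)
    (ηb ηa κ ψ Bmax Amax Υ S φ : ℝ)
    (hηb : 0 < ηb) (hηa : 0 < ηa) (hκ : 1 ≤ κ) (hψ : 0 ≤ ψ)
    (s : ι → β → ℝ)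
    (hspos : ∀ n i, 0 < s n i)
    (hΥ : Υ = ηb * Bmax + ηa * Amax)
    (hSpos : 0 < S) (hΥS : S < Υ)
    (U : Finset ι) (bi : ι → β)
    (hφ : φ = ∑ n ∈ U, q n (bi n))
    -- winners' normalized values are at least the threshold ψ
    (hwin : ∀ n ∈ U, ψ ≤ q n (bi n) / s n (bi n))
    -- (a) greedy stops only when the admitted size exceeds Υ − S
    (hsize : Υ - S ≤ ∑ n ∈ U, s n (bi n))
    -- (b) the greedy dual assignment is feasible
    (hdual : ∀ n i, q n i ≤ (if n ∈ U then q n (bi n) else 0)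
        + (ηb * (κ * ψ)) * B n i + (ηa * (κ * ψ)) * A n i) :
    ∀ x : ι → β → ℝ,
      (∀ n i, x n i = 0 ∨ x n i = 1) →
      (∑ n, ∑ i, x n i * B n i ≤ Bmax) →
      (∑ n, ∑ i, x n i * A n i ≤ Amax) →
      (∀ n, ∑ i, x n i ≤ 1) →
      ∑ n, ∑ i, q n i * x n i ≤ (1 + κ * Υ / (Υ - S)) * φ := by
  intro x hx hB hA hone
  have hx0 : ∀ n i, 0 ≤ x n i := fun n i => by rcases hx n i with h | h <;> simp [h]
  have hκψ : 0 ≤ κ * ψ := mul_nonneg (by linarith) hψ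
  have hgreedy : ψ * (Υ - S) ≤ φ := hφ ▸ (mul_le_mul_of_nonneg_left hsize hψ).trans
    (mul_sum_le_sum_of_forall_le_div U (fun n _ => hspos n (bi n)) hwin)
  have hweak : ∑ n, ∑ i, q n i * x n i ≤ φ + κ * ψ * Υ := by
    refine (packing_weak_duality q B A x _ _ _ Bmax Amax hx0 hone hB hA
      (fun n => by split_ifs <;> simp [hq]) (mul_nonneg hηb.le hκψ) (mul_nonneg hηa.le hκψ) hdual).trans_eq ?_
    rw [sum_ite_mem, univ_inter, ← hφ, hΥ]
    ring
  have hgap : 0 < Υ - S := sub_pos.2 hΥS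
  have hratio : κ * ψ * Υ ≤ κ * Υ / (Υ - S) * φ := by
    have hcoef : 0 ≤ κ * Υ / (Υ - S) :=
      div_nonneg (mul_nonneg (by linarith) (by linarith)) hgap.le
    calc κ * ψ * Υ = κ * Υ / (Υ - S) * (ψ * (Υ - S)) := by field_simp
      _ ≤ κ * Υ / (Υ - S) * φ := mul_le_mul_of_nonneg_left hgreedy hcoef
  linarith

/-- Approximation ratio of the greedy algorithm: under (a) the admitted bids'
total weighted size exceeds Υ − S, (b) the greedy dual assignment is feasible,
the welfare of any feasible integer solution is at most (1 + κΥ/(Υ−S))·φ,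
where φ is the greedy welfare, Υ = η_b·B_max + η_a·A_max and S = max s_{ni}. -/
theorem greedy_approximation_ratio
    {ι β : Type*} [Fintype ι] [Fintype β] [DecidableEq ι]
    (q B A : ι → β → ℝ) (hq : ∀ n i, 0 ≤ q n i)
    (ηb ηa κ ψ Bmax Amax Υ S φ : ℝ)
    (hηb : 0 < ηb) (hηa : 0 < ηa) (hκ : 1 ≤ κ) (hψ : 0 ≤ ψ)
    (s : ι → β → ℝ) (hsdef : ∀ n i, s n i = ηb * B n i + ηa * A n i)
    (hspos : ∀ n i, 0 < s n i)
    (hΥ : Υ = ηb * Bmax + ηa * Amax)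
    (hS : ∀ n i, s n i ≤ S) (hSpos : 0 < S) (hΥS : S < Υ)
    (U : Finset ι) (bi : ι → β)
    (hφ : φ = ∑ n ∈ U, q n (bi n))
    -- winners' normalized values are at least the threshold ψ
    (hwin : ∀ n ∈ U, ψ ≤ q n (bi n) / s n (bi n))
    -- (a) greedy stops only when the admitted size exceeds Υ − S
    (hsize : Υ - S ≤ ∑ n ∈ U, s n (bi n))
    -- (b) the greedy dual assignment is feasible
    (hdual : ∀ n i, q n i ≤ (if n ∈ U then q n (bi n) else 0)
        + (ηb * (κ * ψ)) * B n i + (ηa * (κ * ψ)) * A n i) :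
    ∀ x : ι → β → ℝ,
      (∀ n i, x n i = 0 ∨ x n i = 1) →
      (∑ n, ∑ i, x n i * B n i ≤ Bmax) →
      (∑ n, ∑ i, x n i * A n i ≤ Amax) →
      (∀ n, ∑ i, x n i ≤ 1) →
      ∑ n, ∑ i, q n i * x n i ≤ (1 + κ * Υ / (Υ - S)) * φ :=
  greedy_approximation_ratio_general q B A hq ηb ηa κ ψ Bmax Amax Υ S φ hηb hηa hκ hψ s hspos hΥ
    hSpos hΥS U bi hφ hwin hsize hdual
end
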